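/- For every positive integer n and every x ∈ G_m, the n-fold convolution power of w satisfies w^{*n}(x) = Σ_{i=0}^{m−1} (φ(i)^n − φ(i+1)^n)·p^{i−m}·1[‖x‖ ≤ p^{−i}] + φ(m)^n·1[x = 0]. -/

import Mathlib

open scoped BigOperators Classical

/-- β = (p^{b+1} − 1)/(p^b (p − 1)) -/
noncomputable def betaC (p : ℕ) (b : ℝ) : ℝ :=
  ((p : ℝ) ^ (b + 1) - 1) / ((p : ℝ) ^ b * ((p : ℝ) - 1))

/-- c_m = (p^b − 1)·p^{mb}/(p^{mb} − 1) -/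
noncomputable def cC (p : ℕ) (b : ℝ) (m : ℕ) : ℝ :=
  ((p : ℝ) ^ b - 1) * (p : ℝ) ^ ((m : ℝ) * b) / ((p : ℝ) ^ ((m : ℝ) * b) - 1)

/-- The norm on `G_m = ZMod (p^m)`: `‖x‖ = p^{−v_p(x̄)}` for `x ≠ 0`, `‖0‖ = 0`. -/
noncomputable def pnorm (p m : ℕ) (x : ZMod (p ^ m)) : ℝ :=
  if x = 0 then 0 else (p : ℝ) ^ (-(padicValNat p x.val : ℤ))

/-- The single-step law `w` on `G_m = ZMod (p^m)`. -/
noncomputable def wfun (p : ℕ) (b : ℝ) (m : ℕ) (x : ZMod (p ^ m)) : ℝ :=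
  if x = 0 then 0 else
    cC p b m * (p : ℝ) ^ (-((m - padicValNat p x.val : ℕ) : ℝ) * b) /
      (((p : ℝ) - 1) * (p : ℝ) ^ ((m - padicValNat p x.val : ℕ) - 1))

/-- φ(k), with φ(0) = 1. -/
noncomputable def phiC (p : ℕ) (b : ℝ) (m : ℕ) (k : ℕ) : ℝ :=
  if k = 0 then 1 else
    ((p : ℝ) ^ ((m : ℝ) * b) / ((p : ℝ) ^ ((m : ℝ) * b) - 1)) *
      (1 - betaC p b * (p : ℝ) ^ (((k : ℝ) - (m : ℝ)) * b))

/-- n-fold convolution power on `G_m`, with `w^{*0}` the point mass at `0`. -/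
noncomputable def convPow (p : ℕ) [Fact p.Prime] (m : ℕ) (w : ZMod (p ^ m) → ℝ) :
    ℕ → ZMod (p ^ m) → ℝ
  | 0, x => if x = 0 then 1 else 0
  | n + 1, x => ∑ y : ZMod (p ^ m), convPow p m w n y * w (x - y)

/-!
The functions `e i = p^(i-m) · 1[‖x‖ ≤ p^(-i)]` are the normalized indicators of the decreasing
chain of subgroups `p^i G_m`, so in the group algebra `e i * e j = e (min i j)` and `e m = 1`.
Hence the differences `e k - e (k-1)` form a complete system of orthogonal idempotents. A direct
computation gives `w = ∑ k, φ(k) (e k - e (k-1))`, i.e. the `φ(k)` are the eigenvalues of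
convolution by `w`, so `w^{*n} = ∑ k, φ(k)^n (e k - e (k-1))`, and Abel summation turns this back
into the stated formula.
-/

section Chain

variable {K R : Type*} [CommRing K] [CommRing R] [Algebra K R]

def chainDiff (e : ℕ → R) : ℕ → R
  | 0 => e 0
  | k + 1 => e (k + 1) - e k

theorem sum_range_chainDiff (e : ℕ → R) (M : ℕ) :
    ∑ k ∈ Finset.range (M + 1), chainDiff e k = e M := by
  induction M with
  | zero => simp [chainDiff]
  | succ M ih => rw [Finset.sum_range_succ, ih, chainDiff]; abel

theorem sum_range_smul_chainDiff (c : ℕ → K) (e : ℕ → R) (M : ℕ) :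
    ∑ k ∈ Finset.range (M + 1), c k • chainDiff e k =
      ∑ i ∈ Finset.range M, (c i - c (i + 1)) • e i + c M • e M := by
  induction M with
  | zero => simp [chainDiff]
  | succ M ih =>
    rw [Finset.sum_range_succ, ih, Finset.sum_range_succ, chainDiff, sub_smul, smul_sub]
    abel

theorem chainDiff_mul_of_le {e : ℕ → R} {M : ℕ} (he : ∀ i ≤ M, ∀ j ≤ M, e i * e j = e (min i j))
    {k l : ℕ} (hkl : k ≤ l) (hl : l ≤ M) :
    chainDiff e k * e l = chainDiff e k := by
  cases k with
  | zero => simp [chainDiff, he 0 (by omega) l hl]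
  | succ k =>
    rw [chainDiff, sub_mul, he _ (by omega) l hl, he k (by omega) l hl,
      min_eq_left hkl, min_eq_left (by omega)]

theorem chainDiff_mul_chainDiff {e : ℕ → R} {M : ℕ}
    (he : ∀ i ≤ M, ∀ j ≤ M, e i * e j = e (min i j)) {k j : ℕ} (hk : k ≤ M) (hj : j ≤ M) :
    chainDiff e k * chainDiff e j = if k = j then chainDiff e k else 0 := by
  wlog hkj : k ≤ j generalizing k j
  · rw [mul_comm, this hj hk (by omega), if_neg (by omega), if_neg (by omega)]
  rcases hkj.eq_or_lt with rfl | hlt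
  · rw [if_pos rfl]
    cases k with
    | zero => simp [chainDiff, he 0 hk 0 hk]
    | succ k =>
      have hk' : k ≤ M := by omega
      simp only [chainDiff, sub_mul, mul_sub, he _ hk _ hk, he _ hk' _ hk, he _ hk _ hk',
        he _ hk' _ hk', min_self, min_eq_left (Nat.le_succ k), min_eq_right (Nat.le_succ k)]
      abel
  · obtain ⟨j, rfl⟩ : ∃ j', j = j' + 1 := ⟨j - 1, by omega⟩
    rw [if_neg (by omega), chainDiff, mul_sub, chainDiff_mul_of_le he (by omega) hj,
      chainDiff_mul_of_le he (by omega) (by omega), sub_self]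

theorem pow_sum_smul_of_orthogonal {ι : Type*} [DecidableEq ι] (s : Finset ι) (F : ι → R)
    (hF : ∀ i ∈ s, ∀ j ∈ s, F i * F j = if i = j then F i else 0) (hs : ∑ i ∈ s, F i = 1)
    (c : ι → K) (n : ℕ) :
    (∑ i ∈ s, c i • F i) ^ n = ∑ i ∈ s, c i ^ n • F i := by
  induction n with
  | zero => simp [hs]
  | succ n ih =>
    rw [pow_succ, ih, Finset.sum_mul_sum]
    refine Finset.sum_congr rfl fun i hi => ?_
    rw [Finset.sum_congr rfl fun j hj => by rw [smul_mul_smul_comm, hF i hi j hj, smul_ite,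
      smul_zero], Finset.sum_ite_eq, if_pos hi, pow_succ]

theorem pow_sum_range_sub_smul_of_chain {e : ℕ → R} {M : ℕ}
    (he : ∀ i ≤ M, ∀ j ≤ M, e i * e j = e (min i j)) (heM : e M = 1) (c : ℕ → K) (n : ℕ) :
    (∑ i ∈ Finset.range M, (c i - c (i + 1)) • e i + c M • (1 : R)) ^ n =
      ∑ i ∈ Finset.range M, (c i ^ n - c (i + 1) ^ n) • e i + c M ^ n • (1 : R) := by
  rw [← heM, ← sum_range_smul_chainDiff, ← sum_range_smul_chainDiff]
  refine pow_sum_smul_of_orthogonal _ _ (fun k hk j hj => ?_)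
    (by rw [sum_range_chainDiff, heM]) c n
  simp only [Finset.mem_range, Nat.lt_succ_iff] at hk hj
  exact chainDiff_mul_chainDiff he hk hj

end Chain

namespace AddMonoidAlgebra

variable {K G : Type*} [Field K] [AddCommGroup G] [Fintype G]

noncomputable def uniform (H : AddSubgroup G) : AddMonoidAlgebra K G :=
  (Nat.card H : K)⁻¹ • ∑ h : H, single (h : G) 1

theorem coeff_uniform (H : AddSubgroup G) (x : G) :
    (uniform H : AddMonoidAlgebra K G).coeff x = if x ∈ H then (Nat.card H : K)⁻¹ else 0 := by
  rw [uniform, coeff_smul_apply, coeff_sum, Finset.sum_apply']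
  simp only [coeff_single, Finsupp.single_apply]
  split_ifs with hx
  · have hsub : ∀ h : H, (h : G) = x ↔ h = ⟨x, hx⟩ := fun h => by simp [Subtype.ext_iff]
    simp [hsub]
  · rw [Finset.sum_eq_zero fun (h : H) _ => if_neg fun (e : (h : G) = x) => hx (e ▸ h.2),
      smul_zero]

theorem uniform_mul_uniform_of_le [CharZero K] {H L : AddSubgroup G} (hHL : H ≤ L) :
    (uniform H * uniform L : AddMonoidAlgebra K G) = uniform L := by
  have htrans (h : H) : ∑ l : L, single ((h : G) + l) (1 : K) = ∑ l : L, single (l : G) 1 :=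
    Fintype.sum_equiv (Equiv.addLeft ⟨h, hHL h.2⟩) _ _ fun l => rfl
  rw [uniform, uniform, smul_mul_smul_comm, Finset.sum_mul_sum]
  simp only [single_mul_single, mul_one, htrans, Finset.sum_const, Finset.card_univ,
    ← Nat.card_eq_fintype_card, ← Nat.cast_smul_eq_nsmul K, smul_smul]
  have : (Nat.card H : K) ≠ 0 := Nat.cast_ne_zero.mpr Nat.card_pos.ne'
  congr 1
  field_simp

theorem uniform_bot : (uniform ⊥ : AddMonoidAlgebra K G) = 1 := by
  simp [uniform, one_def]
  rfl

end AddMonoidAlgebra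

theorem ZMod.mem_zmultiples_natCast_iff {N d : ℕ} [NeZero N] (hd : d ∣ N) (x : ZMod N) :
    x ∈ AddSubgroup.zmultiples (d : ZMod N) ↔ d ∣ x.val := by
  constructor
  · rintro ⟨k, rfl⟩
    rw [← ZMod.natCast_eq_zero_iff, ZMod.natCast_val, ← ZMod.castHom_apply (h := hd),
      map_zsmul, map_natCast, ZMod.natCast_self, smul_zero]
  · rintro ⟨k, hk⟩
    rw [← ZMod.natCast_zmod_val x, hk, mul_comm, Nat.cast_mul, ← nsmul_eq_mul]
    exact AddSubgroup.nsmul_mem _ (AddSubgroup.mem_zmultiples _) k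

section PBall

/-- The closed ball `{x | ‖x‖ ≤ p^(-i)}` of `G_m`, which is the subgroup `p^i G_m`. -/
def pBall (p m i : ℕ) : AddSubgroup (ZMod (p ^ m)) :=
  AddSubgroup.zmultiples ((p ^ i : ℕ) : ZMod (p ^ m))

theorem pBall_self (p m : ℕ) : pBall p m m = ⊥ := by
  rw [pBall, ZMod.natCast_self, AddSubgroup.zmultiples_zero_eq_bot]

variable {p m i : ℕ} [NeZero p]

theorem mem_pBall_iff (hi : i ≤ m) (x : ZMod (p ^ m)) : x ∈ pBall p m i ↔ p ^ i ∣ x.val :=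
  ZMod.mem_zmultiples_natCast_iff (pow_dvd_pow p hi) x

theorem card_pBall (hi : i ≤ m) : Nat.card (pBall p m i) = p ^ (m - i) := by
  rw [pBall, Nat.card_zmultiples, ZMod.addOrderOf_coe _ (NeZero.ne _),
    Nat.gcd_eq_right (pow_dvd_pow p hi), Nat.pow_div hi (NeZero.pos p)]

theorem pBall_anti {j : ℕ} (hij : i ≤ j) (hj : j ≤ m) : pBall p m j ≤ pBall p m i :=
  fun x hx => (mem_pBall_iff (hij.trans hj) x).2
    ((pow_dvd_pow p hij).trans ((mem_pBall_iff hj x).1 hx))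

theorem uniform_pBall_mul_uniform_pBall {K : Type*} [Field K] [CharZero K] {j : ℕ}
    (hi : i ≤ m) (hj : j ≤ m) :
    (AddMonoidAlgebra.uniform (pBall p m i) * AddMonoidAlgebra.uniform (pBall p m j) :
      AddMonoidAlgebra K _) = AddMonoidAlgebra.uniform (pBall p m (min i j)) := by
  rcases le_total i j with h | h
  · rw [min_eq_left h, mul_comm, AddMonoidAlgebra.uniform_mul_uniform_of_le (pBall_anti h hj)]
  · rw [min_eq_right h, AddMonoidAlgebra.uniform_mul_uniform_of_le (pBall_anti h hi)]

end PBall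

section Coefficients

open AddMonoidAlgebra

variable {p m : ℕ} [Fact p.Prime]

theorem pnorm_le_iff {i : ℕ} (x : ZMod (p ^ m)) :
    pnorm p m x ≤ (p : ℝ) ^ (-(i : ℝ)) ↔ p ^ i ∣ x.val := by
  by_cases hx : x = 0
  · simp [hx, pnorm]
  · have hp : (1 : ℝ) < p := mod_cast (Fact.out : p.Prime).one_lt
    rw [pnorm, if_neg hx, padicValNat_dvd_iff_le ((ZMod.val_ne_zero x).2 hx),
      ← Real.rpow_intCast, Real.rpow_le_rpow_left_iff hp, Int.cast_neg, Int.cast_natCast,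
      neg_le_neg_iff, Nat.cast_le]

theorem coeff_uniform_pBall {i : ℕ} (hi : i ≤ m) (x : ZMod (p ^ m)) :
    (uniform (pBall p m i) : AddMonoidAlgebra ℝ _).coeff x =
      (p : ℝ) ^ ((i : ℝ) - m) * if pnorm p m x ≤ (p : ℝ) ^ (-(i : ℝ)) then 1 else 0 := by
  have hp : (0 : ℝ) < p := mod_cast (Fact.out : p.Prime).pos
  rw [coeff_uniform, card_pBall hi]
  simp only [mem_pBall_iff hi, pnorm_le_iff, mul_ite, mul_one, mul_zero]
  congr 1
  rw [Nat.cast_pow, ← Real.rpow_natCast, ← Real.rpow_neg hp.le, Nat.cast_sub hi, neg_sub]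

theorem coeff_sum_smul_uniform_pBall_add (c : ℕ → ℝ) (d : ℝ) (x : ZMod (p ^ m)) :
    (∑ i ∈ Finset.range m, c i • uniform (pBall p m i) + d • 1 : AddMonoidAlgebra ℝ _).coeff x =
      ∑ i ∈ Finset.range m, c i *
          ((p : ℝ) ^ ((i : ℝ) - m) * if pnorm p m x ≤ (p : ℝ) ^ (-(i : ℝ)) then 1 else 0) +
        d * if x = 0 then 1 else 0 := by
  simp only [coeff_add, coeff_sum, Finsupp.add_apply, Finsupp.coe_finsetSum, Finset.sum_apply,
    coeff_smul_apply, smul_eq_mul, one_def, coeff_single, Finsupp.single_apply,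
    eq_comm (a := (0 : ZMod (p ^ m)))]
  congr 1
  refine Finset.sum_congr rfl fun i hi => ?_
  rw [coeff_uniform_pBall (Finset.mem_range.1 hi).le]

theorem convPow_coeff (a : AddMonoidAlgebra ℝ (ZMod (p ^ m))) (n : ℕ) (x : ZMod (p ^ m)) :
    convPow p m a.coeff n x = (a ^ n).coeff x := by
  induction n generalizing x with
  | zero => simp [convPow, one_def, Finsupp.single_apply, eq_comm]
  | succ n ih =>
    rw [convPow, pow_succ, coeff_mul_apply_left, Finsupp.sum_fintype _ _ (by simp)]
    simp only [ih, neg_add_eq_sub]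

end Coefficients

section Weight

variable {p : ℕ} {b : ℝ} {m : ℕ}

local notation "q" => (p : ℝ) ^ b

theorem natCast_rpow_natCast_mul (k : ℕ) : (p : ℝ) ^ ((k : ℝ) * b) = q ^ k := by
  rw [mul_comm, Real.rpow_mul_natCast (Nat.cast_nonneg p)]

theorem cC_eq : cC p b m = (q - 1) * q ^ m / (q ^ m - 1) := by
  rw [cC, natCast_rpow_natCast_mul]

variable [Fact p.Prime]

theorem phiC_eq {k : ℕ} (hk : k ≠ 0) :
    phiC p b m k = q ^ m / (q ^ m - 1) * (1 - (q * p - 1) / (q * (p - 1)) * (q ^ k / q ^ m)) := by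
  have hp : (0 : ℝ) < p := mod_cast (Fact.out : p.Prime).pos
  rw [phiC, if_neg hk, betaC, Real.rpow_add hp, Real.rpow_one, sub_mul, Real.rpow_sub hp,
    natCast_rpow_natCast_mul, natCast_rpow_natCast_mul]

-- The right-hand side is `w x` for any `x` with `v_p(x̄) = v`, see `wfun_eq_of_ne_zero`.
theorem sum_range_phiC_sub_mul (hb : 0 < b) {v : ℕ} (hv : v < m) :
    ∑ i ∈ Finset.range (v + 1), (phiC p b m i - phiC p b m (i + 1)) * (p : ℝ) ^ ((i : ℝ) - m) =
      cC p b m * q ^ v * p ^ (v + 1) / (q ^ m * p ^ m * (p - 1)) := by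
  have hp : (1 : ℝ) < p := mod_cast (Fact.out : p.Prime).one_lt
  have hq : 1 < q := Real.one_lt_rpow hp hb
  have hqm : q ^ m - 1 ≠ 0 := (sub_pos.2 (one_lt_pow₀ hq (by omega))).ne'
  have hp1 : (p : ℝ) - 1 ≠ 0 := (sub_pos.2 hp).ne'
  have hrpow (i : ℕ) : (p : ℝ) ^ ((i : ℝ) - m) = p ^ i / p ^ m := by
    rw [Real.rpow_sub (by positivity), Real.rpow_natCast, Real.rpow_natCast]
  induction v with
  | zero =>
    rw [Finset.sum_range_one, phiC, if_pos rfl, phiC_eq (Nat.succ_ne_zero 0), cC_eq, hrpow]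
    field_simp
    ring
  | succ v ih =>
    rw [Finset.sum_range_succ, ih (by omega), phiC_eq (by omega), phiC_eq (by omega), cC_eq, hrpow]
    field_simp
    ring

theorem sum_range_phiC_sub_mul_add_phiC (hb : 0 < b) (hm : 0 < m) :
    ∑ i ∈ Finset.range m, (phiC p b m i - phiC p b m (i + 1)) * (p : ℝ) ^ ((i : ℝ) - m) +
      phiC p b m m = 0 := by
  have hp : (1 : ℝ) < p := mod_cast (Fact.out : p.Prime).one_lt
  have hq : 1 < q := Real.one_lt_rpow hp hb
  have hqm : q ^ m - 1 ≠ 0 := (sub_pos.2 (one_lt_pow₀ hq hm.ne')).ne'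
  have hp1 : (p : ℝ) - 1 ≠ 0 := (sub_pos.2 hp).ne'
  obtain ⟨k, rfl⟩ : ∃ k, m = k + 1 := ⟨m - 1, by omega⟩
  rw [sum_range_phiC_sub_mul hb (Nat.lt_add_one k), phiC_eq (Nat.succ_ne_zero k), cC_eq]
  field_simp
  ring

theorem padicValNat_val_lt {x : ZMod (p ^ m)} (hx : x ≠ 0) : padicValNat p x.val < m := by
  have hval : 0 < x.val := Nat.pos_of_ne_zero ((ZMod.val_ne_zero x).2 hx)
  refine (Nat.pow_lt_pow_iff_right (Fact.out : p.Prime).one_lt).1 ?_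
  exact (Nat.le_of_dvd hval pow_padicValNat_dvd).trans_lt (ZMod.val_lt x)

theorem wfun_eq_of_ne_zero {x : ZMod (p ^ m)} (hx : x ≠ 0) :
    wfun p b m x = cC p b m * q ^ padicValNat p x.val * p ^ (padicValNat p x.val + 1) /
      (q ^ m * p ^ m * (p - 1)) := by
  have hp : (1 : ℝ) < p := mod_cast (Fact.out : p.Prime).one_lt
  have hq : 0 < q := Real.rpow_pos_of_pos (zero_lt_one.trans hp) b
  have hp1 : (p : ℝ) - 1 ≠ 0 := (sub_pos.2 hp).ne'
  have hv := padicValNat_val_lt hx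
  set v := padicValNat p x.val
  obtain ⟨l, hl⟩ : ∃ l, m - v = l + 1 := ⟨m - v - 1, by omega⟩
  have hqm : q ^ m = q ^ v * q ^ (l + 1) := by rw [← pow_add]; congr 1; omega
  have hpm : (p : ℝ) ^ m = p ^ (v + 1) * p ^ l := by rw [← pow_add]; congr 1; omega
  rw [wfun, if_neg hx, hl, neg_mul, Real.rpow_neg (Nat.cast_nonneg p), natCast_rpow_natCast_mul,
    Nat.add_sub_cancel, hqm, hpm]
  field_simp

theorem wfun_eq_sum (hb : 0 < b) (hm : 0 < m) (x : ZMod (p ^ m)) :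
    wfun p b m x =
      ∑ i ∈ Finset.range m, (phiC p b m i - phiC p b m (i + 1)) *
          ((p : ℝ) ^ ((i : ℝ) - m) * if pnorm p m x ≤ (p : ℝ) ^ (-(i : ℝ)) then 1 else 0) +
        phiC p b m m * if x = 0 then 1 else 0 := by
  simp only [pnorm_le_iff, mul_ite, mul_one, mul_zero]
  by_cases hx : x = 0
  · simp only [hx, ZMod.val_zero, dvd_zero, if_true, wfun]
    exact (sum_range_phiC_sub_mul_add_phiC hb hm).symm
  · have hv := padicValNat_val_lt hx
    simp only [padicValNat_dvd_iff_le ((ZMod.val_ne_zero x).2 hx)]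
    rw [if_neg hx, add_zero, ← Finset.sum_range_add_sum_Ico _ hv,
      Finset.sum_eq_zero fun i hi => if_neg (Nat.not_le.2 (Finset.mem_Ico.1 hi).1), add_zero,
      Finset.sum_congr rfl fun i hi => if_pos (Finset.mem_range_succ_iff.1 hi),
      sum_range_phiC_sub_mul hb hv, wfun_eq_of_ne_zero hx]

end Weight

theorem stmt4_general (p : ℕ) [Fact p.Prime] (b : ℝ) (hb : 0 < b) (m : ℕ) (hm : 0 < m)
    (n : ℕ) (x : ZMod (p ^ m)) :
    convPow p m (wfun p b m) n x =
      (∑ i ∈ Finset.range m,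
        (phiC p b m i ^ n - phiC p b m (i + 1) ^ n) * (p : ℝ) ^ ((i : ℝ) - (m : ℝ)) *
          (if pnorm p m x ≤ (p : ℝ) ^ (-(i : ℝ)) then 1 else 0)) +
      phiC p b m m ^ n * (if x = 0 then 1 else 0) := by
  have hw : wfun p b m = (∑ i ∈ Finset.range m,
      (phiC p b m i - phiC p b m (i + 1)) • AddMonoidAlgebra.uniform (pBall p m i) +
        phiC p b m m • 1 : AddMonoidAlgebra ℝ (ZMod (p ^ m))).coeff :=
    funext fun y => by rw [coeff_sum_smul_uniform_pBall_add, wfun_eq_sum hb hm]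
  have hpow := pow_sum_range_sub_smul_of_chain
    (e := fun i => (AddMonoidAlgebra.uniform (pBall p m i) : AddMonoidAlgebra ℝ _))
    (fun i hi j hj => uniform_pBall_mul_uniform_pBall hi hj)
    (by rw [pBall_self, AddMonoidAlgebra.uniform_bot]) (phiC p b m) n
  rw [hw, convPow_coeff, hpow, coeff_sum_smul_uniform_pBall_add]
  simp only [mul_assoc]

/-- For every `n ≥ 1` and every `x ∈ G_m`,
`w^{*n}(x) = Σ_{i=0}^{m−1} (φ(i)^n − φ(i+1)^n)·p^{i−m}·1[‖x‖ ≤ p^{−i}] + φ(m)^n·1[x = 0]`. -/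
theorem stmt4 (p : ℕ) [Fact p.Prime] (b : ℝ) (hb : 0 < b) (m : ℕ) (hm : 0 < m)
    (n : ℕ) (hn : 1 ≤ n) (x : ZMod (p ^ m)) :
    convPow p m (wfun p b m) n x =
      (∑ i ∈ Finset.range m,
        (phiC p b m i ^ n - phiC p b m (i + 1) ^ n) * (p : ℝ) ^ ((i : ℝ) - (m : ℝ)) *
          (if pnorm p m x ≤ (p : ℝ) ^ (-(i : ℝ)) then 1 else 0)) +
      phiC p b m m ^ n * (if x = 0 then 1 else 0) :=
  stmt4_general p b hb m hm n x
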